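/- Let d be an odd prime and n ≥ 1. If n ≥ 2, then the 2d+2 matrices {R_n(T)}_{T ∈ Σ(d)} are linearly independent over ℂ. If n = 1, then the ℂ-linear span of {R_1(T)}_{T ∈ Σ(d)} has dimension 2d+1, and every subset of {R_1(T)}_{T ∈ Σ(d)} of cardinality 2d+1 is linearly independent (hence is a basis of the span). -/

import Mathlib

open scoped Classical

noncomputable section

/-- `𝔽_d³` as triples over `ZMod d`. -/
abbrev F3 (d : ℕ) : Type := Fin 3 → ZMod d

/-- `𝔽_d⁶`, whose elements are written as pairs `(x; y)` with `x, y ∈ 𝔽_d³`. -/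
abbrev V6 (d : ℕ) : Type := (Fin 3 → ZMod d) × (Fin 3 → ZMod d)

/-- The dot product `x·y = ∑ i, x i * y i` on `𝔽_d³`. -/
def dot3 {d : ℕ} (x y : F3 d) : ZMod d := ∑ i, x i * y i

/-- The all-ones vector `1₃`. -/
def one3 (d : ℕ) : F3 d := fun _ => 1

/-- A stochastic Lagrangian subspace of `𝔽_d⁶`: an `𝔽_d`-subspace `T` with
`x·x = y·y` for all `(x; y) ∈ T`, `dim T = 3`, and `(1₃; 1₃) ∈ T`. -/
def IsSLS {d : ℕ} (T : Submodule (ZMod d) (V6 d)) : Prop :=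
  (∀ p ∈ T, dot3 p.1 p.1 = dot3 p.2 p.2) ∧
    Module.finrank (ZMod d) T = 3 ∧ (one3 d, one3 d) ∈ T

/-- `R_n(T)`: the complex matrix indexed by `(𝔽_d³)ⁿ` with `((X₁,…,Xₙ),(Y₁,…,Yₙ))`
entry `1` if `(Xᵢ; Yᵢ) ∈ T` for all `i`, and `0` otherwise. -/
def Rn (d n : ℕ) (T : Submodule (ZMod d) (V6 d)) :
    Matrix (Fin n → F3 d) (Fin n → F3 d) ℂ :=
  Matrix.of fun X Y => if ∀ i, (X i, Y i) ∈ T then 1 else 0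

namespace SLSAux

variable {d : ℕ}

/-- 2×2 "matrices" as plain functions. -/
abbrev MatF (d : ℕ) := Fin 2 → Fin 2 → ZMod d

def vA (d : ℕ) : V6 d := (one3 d, one3 d)

def psiF (M : MatF d) : V6 d :=
  (![M 0 0 + M 0 1 - M 1 0, M 0 1 - M 1 0 - M 1 1, 0],
   ![M 0 1, -(M 1 0), M 0 0 + M 0 1 - M 1 0 - M 1 1])

def vmm (u c : Fin 2 → ZMod d) : MatF d := fun i j => u i * c j

def mdet (M : MatF d) : ZMod d := M 0 0 * M 1 1 - M 0 1 * M 1 0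

def MFz (z : V6 d) : MatF d :=
  ![![z.1 0 + z.1 2 - z.2 0 - z.2 1, z.2 0 - z.1 2],
    ![z.1 2 - z.2 1, z.2 0 + z.2 1 - z.1 1 - z.1 2]]

lemma V6_ext {z w : V6 d} (h1 : ∀ i, z.1 i = w.1 i) (h2 : ∀ i, z.2 i = w.2 i) : z = w :=
  Prod.ext (funext h1) (funext h2)

lemma MF_eq (l : ZMod d) (M : MatF d) : MFz (l • vA d + psiF M) = M := by
  funext i j
  fin_cases i <;> fin_cases j <;>
    simp [MFz, vA, one3, psiF, Matrix.vecHead, Matrix.vecTail] <;> ring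

lemma lam_eq (l : ZMod d) (M : MatF d) : (l • vA d + psiF M).1 2 = l := by
  simp [vA, one3, psiF, Matrix.vecHead, Matrix.vecTail]

lemma recon {z : V6 d}
    (h : z.1 0 + z.1 1 + z.1 2 = z.2 0 + z.2 1 + z.2 2) :
    z = z.1 2 • vA d + psiF (MFz z) := by
  refine V6_ext (fun i => ?_) (fun i => ?_) <;> fin_cases i <;>
    simp [vA, one3, psiF, MFz, Matrix.vecHead, Matrix.vecTail] <;>
    first
      | linear_combination
      | linear_combination h
      | linear_combination -h

lemma sums_eq (l : ZMod d) (M : MatF d) :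
    (l • vA d + psiF M).1 0 + (l • vA d + psiF M).1 1 + (l • vA d + psiF M).1 2
      = (l • vA d + psiF M).2 0 + (l • vA d + psiF M).2 1 + (l • vA d + psiF M).2 2 := by
  simp [vA, one3, psiF, Matrix.vecHead, Matrix.vecTail] ; ring

lemma Qval (l : ZMod d) (M : MatF d) :
    dot3 (l • vA d + psiF M).1 (l • vA d + psiF M).1
      - dot3 (l • vA d + psiF M).2 (l • vA d + psiF M).2 = 2 * mdet M := by
  simp [dot3, Fin.sum_univ_three, vA, one3, psiF, mdet, Matrix.vecHead, Matrix.vecTail] ; ring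

lemma mdet_vmm (u c : Fin 2 → ZMod d) : mdet (vmm u c) = 0 := by
  simp [mdet, vmm] ; ring

lemma mdet_add_vmm (u c u' c' : Fin 2 → ZMod d) :
    mdet (vmm u c + vmm u' c')
      = (u 0 * u' 1 - u 1 * u' 0) * (c 0 * c' 1 - c 1 * c' 0) := by
  simp [mdet, vmm] ; ring

end SLSAux
namespace SLSAux

variable {d : ℕ}

lemma psiF_add (M N : MatF d) : psiF (M + N) = psiF M + psiF N := by
  refine V6_ext (fun i => ?_) (fun i => ?_) <;> fin_cases i <;>
    simp [psiF, Matrix.vecHead, Matrix.vecTail] <;> ring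

lemma psiF_smul (a : ZMod d) (M : MatF d) : psiF (a • M) = a • psiF M := by
  refine V6_ext (fun i => ?_) (fun i => ?_) <;> fin_cases i <;>
    simp [psiF, Matrix.vecHead, Matrix.vecTail] <;> ring

lemma psiF_zero : psiF (0 : MatF d) = 0 := by
  refine V6_ext (fun i => ?_) (fun i => ?_) <;> fin_cases i <;>
    simp [psiF, Matrix.vecHead, Matrix.vecTail]

lemma vmm_add_right (u c c' : Fin 2 → ZMod d) :
    vmm u (c + c') = vmm u c + vmm u c' := by
  funext i j ; simp [vmm] ; ring

lemma vmm_add_left (u u' c : Fin 2 → ZMod d) :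
    vmm (u + u') c = vmm u c + vmm u' c := by
  funext i j ; simp [vmm] ; ring

lemma vmm_smul_right (a : ZMod d) (u c : Fin 2 → ZMod d) :
    vmm u (a • c) = a • vmm u c := by
  funext i j ; simp [vmm] ; ring

lemma vmm_smul_left (a : ZMod d) (u c : Fin 2 → ZMod d) :
    vmm (a • u) c = a • vmm u c := by
  funext i j ; simp [vmm] ; ring

lemma vmm_shift (a : ZMod d) (u c : Fin 2 → ZMod d) :
    vmm (a • u) c = vmm u (a • c) := by
  funext i j ; simp [vmm] ; ring

lemma vmm_zero_right (u : Fin 2 → ZMod d) : vmm u (0 : Fin 2 → ZMod d) = 0 := by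
  funext i j ; simp [vmm]

lemma vmm_zero_left (c : Fin 2 → ZMod d) : vmm (0 : Fin 2 → ZMod d) c = 0 := by
  funext i j ; simp [vmm]

/-- The "column" subspaces. -/
def Tcol (u : Fin 2 → ZMod d) : Submodule (ZMod d) (V6 d) where
  carrier := {z | ∃ (l : ZMod d) (c : Fin 2 → ZMod d), z = l • vA d + psiF (vmm u c)}
  add_mem' := by
    rintro a b ⟨l, c, rfl⟩ ⟨l', c', rfl⟩
    exact ⟨l + l', c + c', by rw [vmm_add_right, psiF_add, add_smul]; abel⟩
  zero_mem' := ⟨0, 0, by rw [vmm_zero_right, psiF_zero, zero_smul, zero_add]⟩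
  smul_mem' := by
    rintro a z ⟨l, c, rfl⟩
    exact ⟨a * l, a • c, by
      rw [vmm_smul_right, psiF_smul, smul_add, smul_smul]⟩

/-- The "row" subspaces. -/
def Trow (f : Fin 2 → ZMod d) : Submodule (ZMod d) (V6 d) where
  carrier := {z | ∃ (l : ZMod d) (w : Fin 2 → ZMod d), z = l • vA d + psiF (vmm w f)}
  add_mem' := by
    rintro a b ⟨l, w, rfl⟩ ⟨l', w', rfl⟩
    exact ⟨l + l', w + w', by rw [vmm_add_left, psiF_add, add_smul]; abel⟩
  zero_mem' := ⟨0, 0, by rw [vmm_zero_left, psiF_zero, zero_smul, zero_add]⟩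
  smul_mem' := by
    rintro a z ⟨l, w, rfl⟩
    exact ⟨a * l, a • w, by
      rw [vmm_smul_left, psiF_smul, smul_add, smul_smul]⟩

lemma mem_Tcol {u : Fin 2 → ZMod d} {z : V6 d} :
    z ∈ Tcol u ↔ ∃ (l : ZMod d) (c : Fin 2 → ZMod d), z = l • vA d + psiF (vmm u c) := Iff.rfl

lemma mem_Trow {f : Fin 2 → ZMod d} {z : V6 d} :
    z ∈ Trow f ↔ ∃ (l : ZMod d) (w : Fin 2 → ZMod d), z = l • vA d + psiF (vmm w f) := Iff.rfl

/-- Uniqueness of the `(l, M)` decomposition. -/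
lemma dec_unique {l l' : ZMod d} {M M' : MatF d}
    (h : l • vA d + psiF M = l' • vA d + psiF M') : l = l' ∧ M = M' := by
  have h1 : l = l' := by
    have := congrArg (fun z : V6 d => z.1 2) h
    simpa [lam_eq] using this
  refine ⟨h1, ?_⟩
  have h2 : MFz (l • vA d + psiF M) = MFz (l' • vA d + psiF M') := by rw [h]
  rwa [MF_eq, MF_eq] at h2

lemma psiF_mem_Tcol {u : Fin 2 → ZMod d} {M : MatF d}
    (h : psiF M ∈ Tcol u) : ∃ c, M = vmm u c := by
  obtain ⟨l, c, hz⟩ := h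
  have : (0 : ZMod d) • vA d + psiF M = l • vA d + psiF (vmm u c) := by
    rw [zero_smul, zero_add]; exact hz
  exact ⟨c, (dec_unique this).2⟩

lemma psiF_mem_Trow {f : Fin 2 → ZMod d} {M : MatF d}
    (h : psiF M ∈ Trow f) : ∃ w, M = vmm w f := by
  obtain ⟨l, w, hz⟩ := h
  have : (0 : ZMod d) • vA d + psiF M = l • vA d + psiF (vmm w f) := by
    rw [zero_smul, zero_add]; exact hz
  exact ⟨w, (dec_unique this).2⟩

lemma psiF_vmm_mem_Tcol (u c : Fin 2 → ZMod d) : psiF (vmm u c) ∈ Tcol u :=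
  ⟨0, c, by rw [zero_smul, zero_add]⟩

lemma psiF_vmm_mem_Trow (w f : Fin 2 → ZMod d) : psiF (vmm w f) ∈ Trow f :=
  ⟨0, w, by rw [zero_smul, zero_add]⟩

lemma vA_mem_Tcol (u : Fin 2 → ZMod d) : vA d ∈ Tcol u :=
  ⟨1, 0, by rw [vmm_zero_right, psiF_zero, one_smul, add_zero]⟩

lemma vA_mem_Trow (f : Fin 2 → ZMod d) : vA d ∈ Trow f :=
  ⟨1, 0, by rw [vmm_zero_left, psiF_zero, one_smul, add_zero]⟩

end SLSAux
namespace SLSAux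

variable {d : ℕ} [Fact (Nat.Prime d)]

lemma coord_ne {u : Fin 2 → ZMod d} (hu : u ≠ 0) : u 0 ≠ 0 ∨ u 1 ≠ 0 := by
  by_contra h
  push_neg at h
  exact hu (funext fun i => by fin_cases i <;> simp [h.1, h.2])

lemma exists_coord_ne {u : Fin 2 → ZMod d} (hu : u ≠ 0) : ∃ i, u i ≠ 0 := by
  rcases coord_ne hu with h | h
  exacts [⟨0, h⟩, ⟨1, h⟩]

lemma parallel_of_wedge {u u' : Fin 2 → ZMod d} (hu : u ≠ 0)
    (hw : u 0 * u' 1 - u 1 * u' 0 = 0) : ∃ μ : ZMod d, u' = μ • u := by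
  rcases coord_ne hu with h0 | h1
  · refine ⟨u' 0 / u 0, funext fun i => ?_⟩
    fin_cases i <;> simp only [Pi.smul_apply, smul_eq_mul, Fin.zero_eta, Fin.mk_one]
    · field_simp
    · field_simp
      first | linear_combination hw | linear_combination -hw
  · refine ⟨u' 1 / u 1, funext fun i => ?_⟩
    fin_cases i <;> simp only [Pi.smul_apply, smul_eq_mul, Fin.zero_eta, Fin.mk_one]
    · field_simp
      first | linear_combination hw | linear_combination -hw
    · field_simp

lemma rank1 {M : MatF d} (hM : M ≠ 0) (hdet : mdet M = 0) :
    ∃ u c, u ≠ 0 ∧ c ≠ 0 ∧ M = vmm u c := by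
  have hdet' : M 0 0 * M 1 1 - M 0 1 * M 1 0 = 0 := hdet
  by_cases hcol : M 0 0 = 0 ∧ M 1 0 = 0
  · refine ⟨![M 0 1, M 1 1], ![0, 1], ?_, ?_, ?_⟩
    · intro h
      apply hM
      funext i j
      fin_cases i <;> fin_cases j <;>
        first
          | exact hcol.1
          | exact hcol.2
          | simpa using congrFun h 0
          | simpa using congrFun h 1
    · intro h
      simpa using congrFun h 1
    · funext i j
      fin_cases i <;> fin_cases j <;> simp [vmm, hcol.1, hcol.2]
  · have hu : (![M 0 0, M 1 0] : Fin 2 → ZMod d) ≠ 0 := by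
      intro h
      exact hcol ⟨by simpa using congrFun h 0, by simpa using congrFun h 1⟩
    by_cases h00 : M 0 0 ≠ 0
    · refine ⟨![M 0 0, M 1 0], ![1, M 0 1 / M 0 0], hu, ?_, ?_⟩
      · intro h
        simpa using congrFun h 0
      · funext i j
        fin_cases i <;> fin_cases j <;> simp [vmm]
        · field_simp
        · field_simp
          first
            | linear_combination hdet'
            | linear_combination -hdet'
            | linear_combination M 0 0 * hdet'
            | linear_combination -M 0 0 * hdet'
    · push_neg at h00
      have h10 : M 1 0 ≠ 0 := by
        intro h
        exact hcol ⟨h00, h⟩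
      have h01 : M 0 1 = 0 := by
        have : M 0 1 * M 1 0 = 0 := by
          simpa [mdet, h00] using hdet.symm
        rcases mul_eq_zero.mp this with h | h
        · exact h
        · exact absurd h h10
      refine ⟨![M 0 0, M 1 0], ![1, M 1 1 / M 1 0], hu, ?_, ?_⟩
      · intro h
        simpa using congrFun h 0
      · funext i j
        fin_cases i <;> fin_cases j <;> simp [vmm, h00, h01]
        field_simp

lemma vmm_analysis {u c u' c' : Fin 2 → ZMod d} (h : vmm u c = vmm u' c')
    (hu : u ≠ 0) (hc : c ≠ 0) :
    ∃ μ ν : ZMod d, μ ≠ 0 ∧ ν ≠ 0 ∧ u' = μ • u ∧ c' = ν • c := by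
  obtain ⟨i0, hi0⟩ := exists_coord_ne hu
  obtain ⟨j0, hj0⟩ := exists_coord_ne hc
  have key : ∀ i j, u i * c j = u' i * c' j := fun i j => congrFun (congrFun h i) j
  have hne : u' i0 * c' j0 ≠ 0 := by
    rw [← key i0 j0]
    exact mul_ne_zero hi0 hj0
  have hu' : u' i0 ≠ 0 := fun h' => hne (by rw [h', zero_mul])
  have hc' : c' j0 ≠ 0 := fun h' => hne (by rw [h', mul_zero])
  refine ⟨c j0 / c' j0, u i0 / u' i0, div_ne_zero hj0 hc', div_ne_zero hi0 hu', ?_, ?_⟩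
  · funext i
    simp only [Pi.smul_apply, smul_eq_mul]
    field_simp
    first
      | linear_combination (key i j0).symm
      | linear_combination key i j0
      | linear_combination c j0 * (key i j0).symm
      | linear_combination c' j0 * key i j0
      | linear_combination -c' j0 * key i j0
  · funext j
    simp only [Pi.smul_apply, smul_eq_mul]
    field_simp
    first
      | linear_combination (key i0 j).symm
      | linear_combination key i0 j
      | linear_combination u i0 * (key i0 j).symm
      | linear_combination u' i0 * key i0 j
      | linear_combination -u' i0 * key i0 j

def par : ZMod d ⊕ Unit → Fin 2 → ZMod d
  | Sum.inl t => ![1, t]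
  | Sum.inr _ => ![0, 1]

lemma par_ne (j : ZMod d ⊕ Unit) : par j ≠ 0 := by
  cases j <;> intro h
  · simpa [par] using congrFun h 0
  · simpa [par] using congrFun h 1

lemma par_inj {a b : ZMod d ⊕ Unit} {μ : ZMod d} (h : par a = μ • par b) : a = b := by
  cases a with
  | inl t =>
    cases b with
    | inl s =>
      have h0 := congrFun h 0
      have h1 := congrFun h 1
      simp [par] at h0 h1
      refine congrArg _ ?_
      rw [h1, ← h0, one_mul]
    | inr u =>
      exfalso
      have h0 := congrFun h 0
      simpa [par] using h0
  | inr u =>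
    cases b with
    | inl s =>
      exfalso
      have h0 := congrFun h 0
      have h1 := congrFun h 1
      simp [par] at h0 h1
      rw [← h0, zero_mul] at h1
      exact one_ne_zero h1
    | inr u' => exact congrArg _ (Subsingleton.elim _ _)

lemma parRep {u : Fin 2 → ZMod d} (hu : u ≠ 0) :
    ∃ (j : ZMod d ⊕ Unit) (μ : ZMod d), μ ≠ 0 ∧ u = μ • par j := by
  by_cases h0 : u 0 ≠ 0
  · refine ⟨Sum.inl (u 1 / u 0), u 0, h0, funext fun i => ?_⟩
    fin_cases i <;> simp [par]
    field_simp
    try ring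
  · push_neg at h0
    have h1 : u 1 ≠ 0 := by
      rcases coord_ne hu with h | h
      · exact absurd h0 h
      · exact h
    refine ⟨Sum.inr (), u 1, h1, funext fun i => ?_⟩
    fin_cases i <;> simp [par, h0]

lemma Tcol_smul {u : Fin 2 → ZMod d} {μ : ZMod d} (hμ : μ ≠ 0) :
    Tcol (μ • u) = Tcol u := by
  ext z
  simp only [mem_Tcol]
  constructor
  · rintro ⟨l, c, rfl⟩
    exact ⟨l, μ • c, by rw [vmm_shift]⟩
  · rintro ⟨l, c, rfl⟩
    refine ⟨l, μ⁻¹ • c, ?_⟩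
    rw [vmm_shift, smul_smul, mul_inv_cancel₀ hμ, one_smul]

lemma Trow_smul {f : Fin 2 → ZMod d} {μ : ZMod d} (hμ : μ ≠ 0) :
    Trow (μ • f) = Trow f := by
  ext z
  simp only [mem_Trow]
  constructor
  · rintro ⟨l, w, rfl⟩
    exact ⟨l, μ • w, by rw [← vmm_shift]⟩
  · rintro ⟨l, w, rfl⟩
    refine ⟨l, μ⁻¹ • w, ?_⟩
    rw [← vmm_shift, smul_smul, mul_inv_cancel₀ hμ, one_smul]

lemma e0_ne : (![1, 0] : Fin 2 → ZMod d) ≠ 0 := by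
  intro h ; simpa using congrFun h 0

lemma e1_ne : (![0, 1] : Fin 2 → ZMod d) ≠ 0 := by
  intro h ; simpa using congrFun h 1

lemma Tcol_ne_Trow {u f : Fin 2 → ZMod d} (hu : u ≠ 0) (hf : f ≠ 0) :
    Tcol u ≠ Trow f := by
  intro h
  have m1 : psiF (vmm u ![1, 0]) ∈ Trow f := h ▸ psiF_vmm_mem_Tcol u ![1, 0]
  have m2 : psiF (vmm u ![0, 1]) ∈ Trow f := h ▸ psiF_vmm_mem_Tcol u ![0, 1]
  obtain ⟨w1, hw1⟩ := psiF_mem_Trow m1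
  obtain ⟨w2, hw2⟩ := psiF_mem_Trow m2
  obtain ⟨μ1, ν1, hμ1, hν1, hw1u, hf1⟩ := vmm_analysis hw1 hu e0_ne
  obtain ⟨μ2, ν2, hμ2, hν2, hw2u, hf2⟩ := vmm_analysis hw2 hu e1_ne
  have hz1 : f 1 = 0 := by
    have := congrFun hf1 1
    simpa using this
  have hz2 : f 1 = ν2 := by
    have := congrFun hf2 1
    simpa using this
  exact hν2 (by rw [← hz2, hz1])

lemma Tcol_par_inj {j k : ZMod d ⊕ Unit} (h : Tcol (par j) = Tcol (par k)) : j = k := by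
  have m1 : psiF (vmm (par j) ![1, 0]) ∈ Tcol (par k) := h ▸ psiF_vmm_mem_Tcol (par j) ![1, 0]
  obtain ⟨c, hc⟩ := psiF_mem_Tcol m1
  obtain ⟨μ, ν, hμ, hν, hk, -⟩ := vmm_analysis hc (par_ne j) e0_ne
  exact (par_inj hk).symm

lemma Trow_par_inj {j k : ZMod d ⊕ Unit} (h : Trow (par j) = Trow (par k)) : j = k := by
  have m1 : psiF (vmm ![1, 0] (par j)) ∈ Trow (par k) := h ▸ psiF_vmm_mem_Trow ![1, 0] (par j)
  obtain ⟨w, hw⟩ := psiF_mem_Trow m1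
  obtain ⟨μ, ν, hμ, hν, -, hk⟩ := vmm_analysis hw e0_ne (par_ne j)
  exact (par_inj hk).symm

end SLSAux
namespace SLSAux

variable {d : ℕ} [Fact (Nat.Prime d)]

/-- Parametrizing linear map for `Tcol u`. -/
def ThC (u : Fin 2 → ZMod d) : (ZMod d × (Fin 2 → ZMod d)) →ₗ[ZMod d] V6 d where
  toFun p := p.1 • vA d + psiF (vmm u p.2)
  map_add' p q := by
    simp only [Prod.fst_add, Prod.snd_add, vmm_add_right, psiF_add, add_smul]
    abel
  map_smul' a p := by
    simp only [Prod.smul_fst, Prod.smul_snd, vmm_smul_right, psiF_smul, smul_eq_mul,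
      RingHom.id_apply, smul_add, smul_smul]

def ThR (f : Fin 2 → ZMod d) : (ZMod d × (Fin 2 → ZMod d)) →ₗ[ZMod d] V6 d where
  toFun p := p.1 • vA d + psiF (vmm p.2 f)
  map_add' p q := by
    simp only [Prod.fst_add, Prod.snd_add, vmm_add_left, psiF_add, add_smul]
    abel
  map_smul' a p := by
    simp only [Prod.smul_fst, Prod.smul_snd, vmm_smul_left, psiF_smul, smul_eq_mul,
      RingHom.id_apply, smul_add, smul_smul]

lemma range_ThC (u : Fin 2 → ZMod d) : LinearMap.range (ThC u) = Tcol u := by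
  ext z
  constructor
  · rintro ⟨p, rfl⟩
    exact ⟨p.1, p.2, rfl⟩
  · rintro ⟨l, c, rfl⟩
    exact ⟨(l, c), rfl⟩

lemma range_ThR (f : Fin 2 → ZMod d) : LinearMap.range (ThR f) = Trow f := by
  ext z
  constructor
  · rintro ⟨p, rfl⟩
    exact ⟨p.1, p.2, rfl⟩
  · rintro ⟨l, w, rfl⟩
    exact ⟨(l, w), rfl⟩

lemma vmm_inj_right {u : Fin 2 → ZMod d} (hu : u ≠ 0) {c c' : Fin 2 → ZMod d}
    (h : vmm u c = vmm u c') : c = c' := by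
  obtain ⟨i0, hi0⟩ := exists_coord_ne hu
  funext j
  have := congrFun (congrFun h i0) j
  exact mul_left_cancel₀ hi0 this

lemma vmm_inj_left {f : Fin 2 → ZMod d} (hf : f ≠ 0) {w w' : Fin 2 → ZMod d}
    (h : vmm w f = vmm w' f) : w = w' := by
  obtain ⟨j0, hj0⟩ := exists_coord_ne hf
  funext i
  have := congrFun (congrFun h i) j0
  exact mul_right_cancel₀ hj0 this

lemma ThC_inj {u : Fin 2 → ZMod d} (hu : u ≠ 0) : Function.Injective (ThC u) := by
  intro p q h
  have h' : p.1 • vA d + psiF (vmm u p.2) = q.1 • vA d + psiF (vmm u q.2) := h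
  obtain ⟨h1, h2⟩ := dec_unique h'
  exact Prod.ext h1 (vmm_inj_right hu h2)

lemma ThR_inj {f : Fin 2 → ZMod d} (hf : f ≠ 0) : Function.Injective (ThR f) := by
  intro p q h
  have h' : p.1 • vA d + psiF (vmm p.2 f) = q.1 • vA d + psiF (vmm q.2 f) := h
  obtain ⟨h1, h2⟩ := dec_unique h'
  exact Prod.ext h1 (vmm_inj_left hf h2)

lemma finrank_dom : Module.finrank (ZMod d) (ZMod d × (Fin 2 → ZMod d)) = 3 := by
  simp [Module.finrank_prod]

lemma finrank_Tcol {u : Fin 2 → ZMod d} (hu : u ≠ 0) :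
    Module.finrank (ZMod d) (Tcol u) = 3 := by
  rw [← range_ThC, LinearMap.finrank_range_of_inj (ThC_inj hu), finrank_dom]

lemma finrank_Trow {f : Fin 2 → ZMod d} (hf : f ≠ 0) :
    Module.finrank (ZMod d) (Trow f) = 3 := by
  rw [← range_ThR, LinearMap.finrank_range_of_inj (ThR_inj hf), finrank_dom]

lemma IsSLS_Tcol {u : Fin 2 → ZMod d} (hu : u ≠ 0) : IsSLS (Tcol u) := by
  refine ⟨?_, finrank_Tcol hu, vA_mem_Tcol u⟩
  rintro p ⟨l, c, rfl⟩
  have h := Qval l (vmm u c)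
  rw [mdet_vmm, mul_zero] at h
  exact sub_eq_zero.mp h

lemma IsSLS_Trow {f : Fin 2 → ZMod d} (hf : f ≠ 0) : IsSLS (Trow f) := by
  refine ⟨?_, finrank_Trow hf, vA_mem_Trow f⟩
  rintro p ⟨l, w, rfl⟩
  have h := Qval l (vmm w f)
  rw [mdet_vmm, mul_zero] at h
  exact sub_eq_zero.mp h

end SLSAux
namespace SLSAux

variable {d : ℕ} [Fact (Nat.Prime d)]

lemma MFz_add (z w : V6 d) : MFz (z + w) = MFz z + MFz w := by
  funext i j
  fin_cases i <;> fin_cases j <;>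
    simp [MFz, Matrix.vecHead, Matrix.vecTail] <;> ring

lemma two_ne (hodd : Odd d) : (2 : ZMod d) ≠ 0 := by
  intro h
  have h' : ((2 : ℕ) : ZMod d) = 0 := by exact_mod_cast h
  have hdvd : d ∣ 2 := (ZMod.natCast_eq_zero_iff 2 d).mp h'
  have hd2 : d = 2 := (Nat.prime_dvd_prime_iff_eq Fact.out Nat.prime_two).mp hdvd
  rw [hd2] at hodd
  exact (by decide : ¬ Odd 2) hodd

theorem classify (hodd : Odd d) {T : Submodule (ZMod d) (V6 d)} (hT : IsSLS T) :
    (∃ u, u ≠ 0 ∧ T = Tcol u) ∨ ∃ f, f ≠ 0 ∧ T = Trow f := by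
  obtain ⟨hQ, hrk, hvmem⟩ := hT
  have hv : vA d ∈ T := hvmem
  have h2 : (2 : ZMod d) ≠ 0 := two_ne hodd
  have hsum : ∀ z ∈ T, z.1 0 + z.1 1 + z.1 2 = z.2 0 + z.2 1 + z.2 2 := by
    intro z hz
    have e0 : dot3 z.1 z.1 - dot3 z.2 z.2 = 0 := sub_eq_zero.mpr (hQ z hz)
    have e1 : dot3 (z + vA d).1 (z + vA d).1 - dot3 (z + vA d).2 (z + vA d).2 = 0 :=
      sub_eq_zero.mpr (hQ _ (T.add_mem hz hv))
    simp only [dot3, Fin.sum_univ_three] at e0 e1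
    have ha : ∀ i : Fin 3, (z + vA d).1 i = z.1 i + 1 := fun _ => rfl
    have hb : ∀ i : Fin 3, (z + vA d).2 i = z.2 i + 1 := fun _ => rfl
    rw [ha 0, ha 1, ha 2, hb 0, hb 1, hb 2] at e1
    apply mul_left_cancel₀ h2
    linear_combination e1 - e0
  have hdec : ∀ z ∈ T, z = z.1 2 • vA d + psiF (MFz z) := fun z hz => recon (hsum z hz)
  have hdet : ∀ z ∈ T, mdet (MFz z) = 0 := by
    intro z hz
    have h := Qval (z.1 2) (MFz z)
    rw [← hdec z hz] at h
    rw [sub_eq_zero.mpr (hQ z hz)] at h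
    rcases mul_eq_zero.mp h.symm with h' | h'
    · exact absurd h' h2
    · exact h'
  by_cases hall : ∀ z ∈ T, MFz z = 0
  · left
    refine ⟨![1, 0], e0_ne, ?_⟩
    have hle : T ≤ Tcol ![1, 0] := by
      intro z hz
      refine ⟨z.1 2, 0, ?_⟩
      rw [vmm_zero_right, psiF_zero, add_zero]
      have h := hdec z hz
      rwa [hall z hz, psiF_zero, add_zero] at h
    exact Submodule.eq_of_le_of_finrank_le hle (by rw [finrank_Tcol e0_ne, hrk])
  · push_neg at hall
    obtain ⟨z1, hz1T, hz1⟩ := hall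
    obtain ⟨u1, c1, hu1, hc1, hM1⟩ := rank1 hz1 (hdet z1 hz1T)
    by_cases hcol : ∀ z ∈ T, ∃ c, MFz z = vmm u1 c
    · left
      refine ⟨u1, hu1, ?_⟩
      have hle : T ≤ Tcol u1 := by
        intro z hz
        obtain ⟨c, hc⟩ := hcol z hz
        exact ⟨z.1 2, c, by rw [← hc]; exact hdec z hz⟩
      exact Submodule.eq_of_le_of_finrank_le hle (by rw [finrank_Tcol hu1, hrk])
    · push_neg at hcol
      obtain ⟨z2, hz2T, hz2⟩ := hcol
      have hz2ne : MFz z2 ≠ 0 := fun h => hz2 0 (by rw [h, vmm_zero_right])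
      obtain ⟨u2, c2, hu2, hc2, hM2⟩ := rank1 hz2ne (hdet z2 hz2T)
      have wu : u1 0 * u2 1 - u1 1 * u2 0 ≠ 0 := by
        intro hw
        obtain ⟨μ, hμ⟩ := parallel_of_wedge hu1 hw
        exact hz2 (μ • c2) (by rw [hM2, hμ, vmm_shift])
      have hd12 : mdet (MFz z1 + MFz z2) = 0 := by
        rw [← MFz_add]
        exact hdet _ (T.add_mem hz1T hz2T)
      rw [hM1, hM2, mdet_add_vmm] at hd12
      have wc : c1 0 * c2 1 - c1 1 * c2 0 = 0 := by
        rcases mul_eq_zero.mp hd12 with h | h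
        · exact absurd h wu
        · exact h
      obtain ⟨ν, hν⟩ := parallel_of_wedge hc1 wc
      have hνne : ν ≠ 0 := by
        intro h
        rw [h, zero_smul] at hν
        exact hc2 hν
      right
      refine ⟨c1, hc1, ?_⟩
      have hle : T ≤ Trow c1 := by
        intro z hz
        rcases eq_or_ne (MFz z) 0 with hM | hM
        · refine ⟨z.1 2, 0, ?_⟩
          rw [vmm_zero_left, psiF_zero, add_zero]
          have h := hdec z hz
          rwa [hM, psiF_zero, add_zero] at h
        · obtain ⟨u3, c3, hu3, hc3, hM3⟩ := rank1 hM (hdet z hz)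
          have wc31 : c1 0 * c3 1 - c1 1 * c3 0 = 0 := by
            by_contra hwc
            have h13 : mdet (MFz z1 + MFz z) = 0 := by
              rw [← MFz_add]
              exact hdet _ (T.add_mem hz1T hz)
            rw [hM1, hM3, mdet_add_vmm] at h13
            have w13 : u1 0 * u3 1 - u1 1 * u3 0 = 0 := by
              rcases mul_eq_zero.mp h13 with h | h
              · exact h
              · exact absurd h hwc
            have h23 : mdet (MFz z2 + MFz z) = 0 := by
              rw [← MFz_add]
              exact hdet _ (T.add_mem hz2T hz)
            rw [hM2, hM3, mdet_add_vmm] at h23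
            have w23 : u2 0 * u3 1 - u2 1 * u3 0 = 0 := by
              rcases mul_eq_zero.mp h23 with h | h
              · exact h
              · exfalso
                apply hwc
                have hc20 := congrFun hν 0
                have hc21 := congrFun hν 1
                simp only [Pi.smul_apply, smul_eq_mul] at hc20 hc21
                have : ν * (c1 0 * c3 1 - c1 1 * c3 0) = 0 := by
                  linear_combination h - c3 1 * hc20 + c3 0 * hc21
                rcases mul_eq_zero.mp this with h' | h'
                · exact absurd h' hνne
                · exact h'
            obtain ⟨α, hα⟩ := parallel_of_wedge hu1 w13
            have hαne : α ≠ 0 := by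
              intro h
              rw [h, zero_smul] at hα
              exact hu3 hα
            obtain ⟨β, hβ⟩ := parallel_of_wedge hu2 w23
            have hβne : β ≠ 0 := by
              intro h
              rw [h, zero_smul] at hβ
              exact hu3 hβ
            apply wu
            have k0 : α * u1 0 = β * u2 0 := by
              have e1 := congrFun hα 0
              have e2 := congrFun hβ 0
              simp only [Pi.smul_apply, smul_eq_mul] at e1 e2
              rw [← e1, ← e2]
            have k1 : α * u1 1 = β * u2 1 := by
              have e1 := congrFun hα 1
              have e2 := congrFun hβ 1
              simp only [Pi.smul_apply, smul_eq_mul] at e1 e2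
              rw [← e1, ← e2]
            have hz0 : α * β * (u1 0 * u2 1 - u1 1 * u2 0) = 0 := by
              linear_combination β * u2 1 * k0 - β * u2 0 * k1
            rcases mul_eq_zero.mp hz0 with h' | h'
            · exact absurd h' (mul_ne_zero hαne hβne)
            · exact h'
          obtain ⟨γ, hγ⟩ := parallel_of_wedge hc1 wc31
          refine ⟨z.1 2, γ • u3, ?_⟩
          rw [vmm_shift]
          have h := hdec z hz
          rwa [hM3, hγ] at h
      exact Submodule.eq_of_le_of_finrank_le hle (by rw [finrank_Trow hc1, hrk])

end SLSAux
namespace SLSAux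

variable {d : ℕ} [Fact (Nat.Prime d)]

abbrev Idx (d : ℕ) := (ZMod d ⊕ Unit) ⊕ (ZMod d ⊕ Unit)

def PhiC (j : ZMod d ⊕ Unit) : {T : Submodule (ZMod d) (V6 d) // IsSLS T} :=
  ⟨Tcol (par j), IsSLS_Tcol (par_ne j)⟩

def PhiR (j : ZMod d ⊕ Unit) : {T : Submodule (ZMod d) (V6 d) // IsSLS T} :=
  ⟨Trow (par j), IsSLS_Trow (par_ne j)⟩

def Phi : Idx d → {T : Submodule (ZMod d) (V6 d) // IsSLS T}
  | Sum.inl j => PhiC j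
  | Sum.inr j => PhiR j

lemma Phi_inj : Function.Injective (Phi (d := d)) := by
  intro a b h
  cases a with
  | inl j =>
    cases b with
    | inl k => exact congrArg Sum.inl (Tcol_par_inj (congrArg Subtype.val h))
    | inr k => exact absurd (congrArg Subtype.val h) (Tcol_ne_Trow (par_ne j) (par_ne k))
  | inr j =>
    cases b with
    | inl k => exact absurd (congrArg Subtype.val h).symm (Tcol_ne_Trow (par_ne k) (par_ne j))
    | inr k => exact congrArg Sum.inr (Trow_par_inj (congrArg Subtype.val h))

lemma Phi_surj (hodd : Odd d) : Function.Surjective (Phi (d := d)) := by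
  intro T
  rcases classify hodd T.2 with ⟨u, hu, hTu⟩ | ⟨f, hf, hTf⟩
  · obtain ⟨j, μ, hμ, hueq⟩ := parRep hu
    exact ⟨Sum.inl j, Subtype.ext (by
      show Tcol (par j) = T.1
      rw [hTu, hueq, Tcol_smul hμ])⟩
  · obtain ⟨j, μ, hμ, hfeq⟩ := parRep hf
    exact ⟨Sum.inr j, Subtype.ext (by
      show Trow (par j) = T.1
      rw [hTf, hfeq, Trow_smul hμ])⟩

lemma Phi_bij (hodd : Odd d) : Function.Bijective (Phi (d := d)) :=
  ⟨Phi_inj, Phi_surj hodd⟩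

lemma card_SLS (hodd : Odd d) :
    Nat.card {T : Submodule (ZMod d) (V6 d) // IsSLS T} = 2 * d + 2 := by
  haveI : NeZero d := ⟨(Fact.out : Nat.Prime d).ne_zero⟩
  rw [← Nat.card_eq_of_bijective _ (Phi_bij hodd)]
  simp only [Idx, Nat.card_sum, Nat.card_zmod, Nat.card_unique]
  ring

lemma finite_SLS (hodd : Odd d) : Finite {T : Submodule (ZMod d) (V6 d) // IsSLS T} := by
  haveI : NeZero d := ⟨(Fact.out : Nat.Prime d).ne_zero⟩
  exact Finite.of_surjective _ (Phi_surj hodd)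

lemma mem_both_col (hodd : Odd d) {u : Fin 2 → ZMod d} (hu : u ≠ 0)
    {T : Submodule (ZMod d) (V6 d)} (hT : IsSLS T)
    (h1 : psiF (vmm u ![1, 0]) ∈ T) (h2 : psiF (vmm u ![0, 1]) ∈ T) : T = Tcol u := by
  rcases classify hodd hT with ⟨u', hu', rfl⟩ | ⟨f, hf, rfl⟩
  · obtain ⟨c, hc⟩ := psiF_mem_Tcol h1
    obtain ⟨μ, ν, hμ, hν, hμu, -⟩ := vmm_analysis hc hu e0_ne
    rw [hμu, Tcol_smul hμ]
  · exfalso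
    obtain ⟨w1, hw1⟩ := psiF_mem_Trow h1
    obtain ⟨w2, hw2⟩ := psiF_mem_Trow h2
    obtain ⟨-, ν1, -, hν1, -, hf1⟩ := vmm_analysis hw1 hu e0_ne
    obtain ⟨-, ν2, -, hν2, -, hf2⟩ := vmm_analysis hw2 hu e1_ne
    have a1 : f 1 = 0 := by simpa using congrFun hf1 1
    have a2 : f 1 = ν2 := by simpa using congrFun hf2 1
    exact hν2 (by rw [← a2, a1])

lemma mem_both_row (hodd : Odd d) {f : Fin 2 → ZMod d} (hf : f ≠ 0)
    {T : Submodule (ZMod d) (V6 d)} (hT : IsSLS T)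
    (h1 : psiF (vmm ![1, 0] f) ∈ T) (h2 : psiF (vmm ![0, 1] f) ∈ T) : T = Trow f := by
  rcases classify hodd hT with ⟨u', hu', rfl⟩ | ⟨f', hf', rfl⟩
  · exfalso
    obtain ⟨c1', hc1⟩ := psiF_mem_Tcol h1
    obtain ⟨c2', hc2⟩ := psiF_mem_Tcol h2
    obtain ⟨μ1, -, hμ1, -, hu1, -⟩ := vmm_analysis hc1 e0_ne hf
    obtain ⟨μ2, -, hμ2, -, hu2, -⟩ := vmm_analysis hc2 e1_ne hf
    have a1 : u' 1 = 0 := by simpa using congrFun hu1 1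
    have a2 : u' 1 = μ2 := by simpa using congrFun hu2 1
    exact hμ2 (by rw [← a2, a1])
  · obtain ⟨w, hw⟩ := psiF_mem_Trow h1
    obtain ⟨μ, ν, hμ, hν, -, hνf⟩ := vmm_analysis hw e0_ne hf
    rw [hνf, Trow_smul hν]

lemma part1 (hodd : Odd d) {n : ℕ} (hn : 2 ≤ n) :
    LinearIndependent ℂ
      (fun T : {T : Submodule (ZMod d) (V6 d) // IsSLS T} => Rn d n T.1) := by
  rw [linearIndependent_iff']
  intro s g hsum T hTs
  obtain ⟨a, b, haT, hbT, hiso⟩ :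
      ∃ a b : V6 d, a ∈ T.1 ∧ b ∈ T.1 ∧
        ∀ T' : {T : Submodule (ZMod d) (V6 d) // IsSLS T},
          a ∈ T'.1 → b ∈ T'.1 → T' = T := by
    rcases classify hodd T.2 with ⟨u, hu, hTu⟩ | ⟨f, hf, hTf⟩
    · refine ⟨psiF (vmm u ![1, 0]), psiF (vmm u ![0, 1]), ?_, ?_, ?_⟩
      · rw [hTu]; exact psiF_vmm_mem_Tcol u _
      · rw [hTu]; exact psiF_vmm_mem_Tcol u _
      · intro T' h1 h2
        exact Subtype.ext (by rw [hTu]; exact mem_both_col hodd hu T'.2 h1 h2)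
    · refine ⟨psiF (vmm ![1, 0] f), psiF (vmm ![0, 1] f), ?_, ?_, ?_⟩
      · rw [hTf]; exact psiF_vmm_mem_Trow _ f
      · rw [hTf]; exact psiF_vmm_mem_Trow _ f
      · intro T' h1 h2
        exact Subtype.ext (by rw [hTf]; exact mem_both_row hodd hf T'.2 h1 h2)
  let X : Fin n → F3 d := fun i => if (i : ℕ) = 0 then a.1 else b.1
  let Y : Fin n → F3 d := fun i => if (i : ℕ) = 0 then a.2 else b.2
  have h := congrArg (fun A => A X Y) hsum
  simp only [Finset.sum_apply, Matrix.sum_apply, Matrix.smul_apply, Matrix.zero_apply,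
    Rn, Matrix.of_apply, smul_eq_mul] at h
  have hterm : ∀ T' ∈ s,
      (g T' * if ∀ i, (X i, Y i) ∈ T'.1 then (1 : ℂ) else 0)
        = if T' = T then g T' else 0 := by
    intro T' _
    by_cases hTT : T' = T
    · subst hTT
      rw [if_pos, if_pos rfl, mul_one]
      intro i
      by_cases hi : (i : ℕ) = 0
      · simpa [X, Y, hi] using haT
      · simpa [X, Y, hi] using hbT
    · rw [if_neg, if_neg hTT, mul_zero]
      intro hall
      apply hTT
      have h0 := hall ⟨0, by omega⟩
      have h1 := hall ⟨1, by omega⟩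
      simp only [X, Y] at h0 h1
      norm_num at h0 h1
      exact hiso T' (by simpa using h0) (by simpa using h1)
  rw [Finset.sum_congr rfl hterm, Finset.sum_ite_eq' s T g, if_pos hTs] at h
  exact h

end SLSAux
namespace SLSAux

variable {d : ℕ} [Fact (Nat.Prime d)]

lemma mem_sums_col {u : Fin 2 → ZMod d} {z : V6 d} (h : z ∈ Tcol u) :
    z.1 0 + z.1 1 + z.1 2 = z.2 0 + z.2 1 + z.2 2 := by
  obtain ⟨l, c, rfl⟩ := h
  exact sums_eq l (vmm u c)

lemma mem_sums_row {f : Fin 2 → ZMod d} {z : V6 d} (h : z ∈ Trow f) :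
    z.1 0 + z.1 1 + z.1 2 = z.2 0 + z.2 1 + z.2 2 := by
  obtain ⟨l, w, rfl⟩ := h
  exact sums_eq l (vmm w f)

lemma mem_Tcol_iff_dec {z : V6 d}
    (hs : z.1 0 + z.1 1 + z.1 2 = z.2 0 + z.2 1 + z.2 2) (u : Fin 2 → ZMod d) :
    z ∈ Tcol u ↔ ∃ c, MFz z = vmm u c := by
  constructor
  · rintro ⟨l, c, hz⟩
    exact ⟨c, (dec_unique ((recon hs).symm.trans hz)).2⟩
  · rintro ⟨c, hc⟩
    exact ⟨z.1 2, c, by rw [← hc]; exact recon hs⟩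

lemma mem_Trow_iff_dec {z : V6 d}
    (hs : z.1 0 + z.1 1 + z.1 2 = z.2 0 + z.2 1 + z.2 2) (f : Fin 2 → ZMod d) :
    z ∈ Trow f ↔ ∃ w, MFz z = vmm w f := by
  constructor
  · rintro ⟨l, w, hz⟩
    exact ⟨w, (dec_unique ((recon hs).symm.trans hz)).2⟩
  · rintro ⟨w, hw⟩
    exact ⟨z.1 2, w, by rw [← hw]; exact recon hs⟩

lemma REL [NeZero d] :
    (∑ j : ZMod d ⊕ Unit, Rn d 1 (Tcol (par j)))
      = ∑ j : ZMod d ⊕ Unit, Rn d 1 (Trow (par j)) := by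
  ext X Y
  simp only [Matrix.sum_apply, Rn, Matrix.of_apply, Fin.forall_fin_one]
  suffices h : ∀ z : V6 d,
      (∑ j : ZMod d ⊕ Unit, if z ∈ Tcol (par j) then (1 : ℂ) else 0)
        = ∑ j : ZMod d ⊕ Unit, if z ∈ Trow (par j) then (1 : ℂ) else 0 by
    exact h (X 0, Y 0)
  intro z
  by_cases hs : z.1 0 + z.1 1 + z.1 2 = z.2 0 + z.2 1 + z.2 2
  · by_cases hM : MFz z = 0
    · have hcol : ∀ j : ZMod d ⊕ Unit, z ∈ Tcol (par j) := fun j =>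
        (mem_Tcol_iff_dec hs (par j)).mpr ⟨0, by rw [hM, vmm_zero_right]⟩
      have hrow : ∀ j : ZMod d ⊕ Unit, z ∈ Trow (par j) := fun j =>
        (mem_Trow_iff_dec hs (par j)).mpr ⟨0, by rw [hM, vmm_zero_left]⟩
      have e1 : (∑ j : ZMod d ⊕ Unit, if z ∈ Tcol (par j) then (1 : ℂ) else 0)
          = ∑ _j : ZMod d ⊕ Unit, (1 : ℂ) :=
        Finset.sum_congr rfl fun j _ => if_pos (hcol j)
      have e2 : (∑ j : ZMod d ⊕ Unit, if z ∈ Trow (par j) then (1 : ℂ) else 0)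
          = ∑ _j : ZMod d ⊕ Unit, (1 : ℂ) :=
        Finset.sum_congr rfl fun j _ => if_pos (hrow j)
      rw [e1, e2]
    · by_cases hdet0 : mdet (MFz z) = 0
      · obtain ⟨u0, c0, hu0, hc0, hM0⟩ := rank1 hM hdet0
        obtain ⟨j0, μ, hμ, hu0e⟩ := parRep hu0
        obtain ⟨j1, ν, hν, hc0e⟩ := parRep hc0
        have hcol : ∀ j : ZMod d ⊕ Unit, z ∈ Tcol (par j) ↔ j = j0 := by
          intro j
          rw [mem_Tcol_iff_dec hs]
          constructor
          · rintro ⟨c, hc⟩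
            rw [hM0] at hc
            obtain ⟨μ', -, -, -, hpj, -⟩ := vmm_analysis hc hu0 hc0
            rw [hu0e, smul_smul] at hpj
            exact par_inj hpj
          · rintro rfl
            exact ⟨μ • c0, by rw [hM0, hu0e, vmm_shift]⟩
        have hrow : ∀ j : ZMod d ⊕ Unit, z ∈ Trow (par j) ↔ j = j1 := by
          intro j
          rw [mem_Trow_iff_dec hs]
          constructor
          · rintro ⟨w, hw⟩
            rw [hM0] at hw
            obtain ⟨-, ν', -, -, -, hpj⟩ := vmm_analysis hw hu0 hc0
            rw [hc0e, smul_smul] at hpj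
            exact par_inj hpj
          · rintro rfl
            refine ⟨ν • u0, ?_⟩
            rw [hM0, hc0e, ← vmm_shift]
        have e1 : (∑ j : ZMod d ⊕ Unit, if z ∈ Tcol (par j) then (1 : ℂ) else 0)
            = ∑ j : ZMod d ⊕ Unit, if j = j0 then (1 : ℂ) else 0 :=
          Finset.sum_congr rfl fun j _ => if_congr (hcol j) rfl rfl
        have e2 : (∑ j : ZMod d ⊕ Unit, if z ∈ Trow (par j) then (1 : ℂ) else 0)
            = ∑ j : ZMod d ⊕ Unit, if j = j1 then (1 : ℂ) else 0 :=
          Finset.sum_congr rfl fun j _ => if_congr (hrow j) rfl rfl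
        rw [e1, e2, Finset.sum_ite_eq' Finset.univ j0 (fun _ => (1 : ℂ)),
          Finset.sum_ite_eq' Finset.univ j1 (fun _ => (1 : ℂ)),
          if_pos (Finset.mem_univ j0), if_pos (Finset.mem_univ j1)]
      · have hcol : ∀ j : ZMod d ⊕ Unit, ¬ z ∈ Tcol (par j) := by
          intro j hmem
          obtain ⟨c, hc⟩ := (mem_Tcol_iff_dec hs (par j)).mp hmem
          exact hdet0 (by rw [hc, mdet_vmm])
        have hrow : ∀ j : ZMod d ⊕ Unit, ¬ z ∈ Trow (par j) := by
          intro j hmem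
          obtain ⟨w, hw⟩ := (mem_Trow_iff_dec hs (par j)).mp hmem
          exact hdet0 (by rw [hw, mdet_vmm])
        have e1 : (∑ j : ZMod d ⊕ Unit, if z ∈ Tcol (par j) then (1 : ℂ) else 0)
            = ∑ _j : ZMod d ⊕ Unit, (0 : ℂ) :=
          Finset.sum_congr rfl fun j _ => if_neg (hcol j)
        have e2 : (∑ j : ZMod d ⊕ Unit, if z ∈ Trow (par j) then (1 : ℂ) else 0)
            = ∑ _j : ZMod d ⊕ Unit, (0 : ℂ) :=
          Finset.sum_congr rfl fun j _ => if_neg (hrow j)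
        rw [e1, e2]
  · have e1 : (∑ j : ZMod d ⊕ Unit, if z ∈ Tcol (par j) then (1 : ℂ) else 0)
        = ∑ _j : ZMod d ⊕ Unit, (0 : ℂ) :=
      Finset.sum_congr rfl fun j _ => if_neg fun hm => hs (mem_sums_col hm)
    have e2 : (∑ j : ZMod d ⊕ Unit, if z ∈ Trow (par j) then (1 : ℂ) else 0)
        = ∑ _j : ZMod d ⊕ Unit, (0 : ℂ) :=
      Finset.sum_congr rfl fun j _ => if_neg fun hm => hs (mem_sums_row hm)
    rw [e1, e2]

lemma PhiC_ne_PhiR (j j' : ZMod d ⊕ Unit) : PhiC (d := d) j ≠ PhiR j' := fun h =>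
  Tcol_ne_Trow (par_ne j) (par_ne j') (congrArg Subtype.val h)

lemma KER [Fintype {T : Submodule (ZMod d) (V6 d) // IsSLS T}] (hodd : Odd d)
    (c : {T : Submodule (ZMod d) (V6 d) // IsSLS T} → ℂ)
    (hsum : ∑ T : {T : Submodule (ZMod d) (V6 d) // IsSLS T}, c T • Rn d 1 T.1 = 0)
    (j j' : ZMod d ⊕ Unit) : c (PhiC j) + c (PhiR j') = 0 := by
  set z : V6 d := psiF (vmm (par j) (par j')) with hzdef
  have h := congrArg (fun A => A (fun _ : Fin 1 => z.1) (fun _ : Fin 1 => z.2)) hsum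
  simp only [Matrix.sum_apply, Matrix.smul_apply, Matrix.zero_apply, Rn, Matrix.of_apply,
    smul_eq_mul, Fin.forall_fin_one] at h
  have hiff : ∀ T : {T : Submodule (ZMod d) (V6 d) // IsSLS T},
      (z.1, z.2) ∈ T.1 ↔ (T = PhiC j ∨ T = PhiR j') := by
    intro T
    rw [Prod.mk.eta]
    constructor
    · intro hmem
      rcases classify hodd T.2 with ⟨u, hu, hTu⟩ | ⟨f, hf, hTf⟩
      · left
        refine Subtype.ext ?_
        rw [hTu] at hmem ⊢
        obtain ⟨cc, hcc⟩ := psiF_mem_Tcol hmem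
        obtain ⟨μ, -, hμ, -, hpj, -⟩ := vmm_analysis hcc (par_ne j) (par_ne j')
        show Tcol u = (PhiC j).1
        rw [hpj, Tcol_smul hμ]
        rfl
      · right
        refine Subtype.ext ?_
        rw [hTf] at hmem ⊢
        obtain ⟨w, hw⟩ := psiF_mem_Trow hmem
        obtain ⟨-, ν, -, hν, -, hpj⟩ := vmm_analysis hw (par_ne j) (par_ne j')
        show Trow f = (PhiR j').1
        rw [hpj, Trow_smul hν]
        rfl
    · rintro (rfl | rfl)
      · exact psiF_vmm_mem_Tcol _ _
      · exact psiF_vmm_mem_Trow _ _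
  have hterm : ∀ T ∈ (Finset.univ : Finset {T : Submodule (ZMod d) (V6 d) // IsSLS T}),
      (c T * if (z.1, z.2) ∈ T.1 then (1 : ℂ) else 0)
        = (if T = PhiC j then c T else 0) + (if T = PhiR j' then c T else 0) := by
    intro T _
    by_cases h1 : T = PhiC j
    · subst h1
      rw [if_pos ((hiff _).mpr (Or.inl rfl)), if_pos rfl, if_neg (PhiC_ne_PhiR j j'), mul_one,
        add_zero]
    · by_cases h2 : T = PhiR j'
      · subst h2
        rw [if_pos ((hiff _).mpr (Or.inr rfl)), if_neg h1, if_pos rfl, mul_one, zero_add]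
      · rw [if_neg, if_neg h1, if_neg h2, mul_zero, add_zero]
        intro hmem
        rcases (hiff T).mp hmem with h | h
        · exact h1 h
        · exact h2 h
  rw [Finset.sum_congr rfl hterm, Finset.sum_add_distrib,
    Finset.sum_ite_eq' Finset.univ (PhiC j) c, Finset.sum_ite_eq' Finset.univ (PhiR j') c,
    if_pos (Finset.mem_univ _), if_pos (Finset.mem_univ _)] at h
  exact h

end SLSAux
namespace SLSAux

variable {d : ℕ} [Fact (Nat.Prime d)]

lemma part3 [Fintype {T : Submodule (ZMod d) (V6 d) // IsSLS T}] (hodd : Odd d)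
    (hcard : Nat.card {T : Submodule (ZMod d) (V6 d) // IsSLS T} = 2 * d + 2)
    (s : Set {T : Submodule (ZMod d) (V6 d) // IsSLS T}) (hs : s.ncard = 2 * d + 1) :
    LinearIndependent ℂ (fun T : ↥s => Rn d 1 T.1.1) := by
  have hcompl : sᶜ.ncard = 1 := by
    have h := Set.ncard_add_ncard_compl s
    omega
  obtain ⟨T₀, hT₀⟩ := Set.ncard_eq_one.mp hcompl
  rw [Fintype.linearIndependent_iff]
  intro g hg
  set G : {T : Submodule (ZMod d) (V6 d) // IsSLS T} → ℂ :=
    fun T => if h : T ∈ s then g ⟨T, h⟩ else 0 with hG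
  have h3 : ∀ x : ↥s, G x.1 = g x := by
    intro x
    rw [hG]
    simp only [x.2, dif_pos]
  have hGs : ∑ T : {T : Submodule (ZMod d) (V6 d) // IsSLS T}, G T • Rn d 1 T.1 = 0 := by
    have h1 : ∑ T ∈ Finset.univ.filter (· ∈ s), G T • Rn d 1 T.1
        = ∑ T : {T : Submodule (ZMod d) (V6 d) // IsSLS T}, G T • Rn d 1 T.1 :=
      Finset.sum_filter_of_ne (by
        intro T _ hne
        by_contra hTs
        exact hne (by rw [hG]; simp only [hTs, dif_neg, not_false_iff, zero_smul]))
    have h2 : ∑ T ∈ Finset.univ.filter (· ∈ s), G T • Rn d 1 T.1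
        = ∑ x : ↥s, G x.1 • Rn d 1 x.1.1 :=
      Finset.sum_subtype _ (by simp) _
    rw [← h1, h2, ← hg]
    exact Finset.sum_congr rfl fun x _ => by rw [h3]
  have hK := KER hodd G hGs
  have hT₀n : T₀ ∉ s := by
    rw [← Set.mem_compl_iff, hT₀]
    exact rfl
  have hGT₀ : G T₀ = 0 := by rw [hG]; exact dif_neg hT₀n
  have hsurj : ∀ T : {T : Submodule (ZMod d) (V6 d) // IsSLS T},
      (∃ j, T = PhiC j) ∨ (∃ j, T = PhiR j) := by
    intro T
    rcases Phi_surj hodd T with ⟨i, hi⟩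
    cases i with
    | inl j => exact Or.inl ⟨j, hi.symm⟩
    | inr j => exact Or.inr ⟨j, hi.symm⟩
  have hzero : ∀ T : {T : Submodule (ZMod d) (V6 d) // IsSLS T}, G T = 0 := by
    rcases hsurj T₀ with ⟨j₀, hj₀⟩ | ⟨j₀, hj₀⟩
    · have hrow : ∀ j', G (PhiR j') = 0 := by
        intro j'
        have h := hK j₀ j'
        rw [← hj₀, hGT₀, zero_add] at h
        exact h
      have hcol : ∀ j, G (PhiC j) = 0 := by
        intro j
        have h := hK j (Sum.inr ())
        rw [hrow (Sum.inr ()), add_zero] at h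
        exact h
      intro T
      rcases hsurj T with ⟨j, rfl⟩ | ⟨j, rfl⟩
      exacts [hcol j, hrow j]
    · have hcol : ∀ j, G (PhiC j) = 0 := by
        intro j
        have h := hK j j₀
        rw [← hj₀, hGT₀, add_zero] at h
        exact h
      have hrow : ∀ j', G (PhiR j') = 0 := by
        intro j'
        have h := hK (Sum.inr ()) j'
        rw [hcol (Sum.inr ()), zero_add] at h
        exact h
      intro T
      rcases hsurj T with ⟨j, rfl⟩ | ⟨j, rfl⟩
      exacts [hcol j, hrow j]
  intro x
  rw [← h3 x]
  exact hzero x.1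

set_option maxHeartbeats 1000000 in
lemma part2rank [Fintype {T : Submodule (ZMod d) (V6 d) // IsSLS T}] [NeZero d] (hodd : Odd d)
    (hcard : Nat.card {T : Submodule (ZMod d) (V6 d) // IsSLS T} = 2 * d + 2) :
    Module.finrank ℂ
        ↥(Submodule.span ℂ (Set.range
          (fun T : {T : Submodule (ZMod d) (V6 d) // IsSLS T} => Rn d 1 T.1))) =
      2 * d + 1 := by
  classical
  set fI : Idx d → Matrix (Fin 1 → F3 d) (Fin 1 → F3 d) ℂ :=
    fun i => Rn d 1 (Phi i).1 with hfI
  set jstar : Idx d := Sum.inr (Sum.inr ()) with hjstar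
  set S' : Finset (Matrix (Fin 1 → F3 d) (Fin 1 → F3 d) ℂ) :=
    (Finset.univ.erase jstar).image fI with hS'
  have hmemS' : ∀ i : Idx d, i ≠ jstar → fI i ∈ (S' : Set _) := by
    intro i hi
    exact Finset.mem_coe.mpr (Finset.mem_image.mpr
      ⟨i, Finset.mem_erase.mpr ⟨hi, Finset.mem_univ _⟩, rfl⟩)
  have hmem : fI jstar ∈ Submodule.span ℂ (S' : Set _) := by
    have hsplit : (∑ j : ZMod d ⊕ Unit, Rn d 1 (Trow (par j)))
        = (∑ j ∈ Finset.univ.erase (Sum.inr ()), Rn d 1 (Trow (par j)))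
          + Rn d 1 (Trow (par (Sum.inr ()))) :=
      (Finset.sum_erase_add _ _ (Finset.mem_univ _)).symm
    have heq : fI jstar = (∑ j : ZMod d ⊕ Unit, Rn d 1 (Tcol (par j)))
        - ∑ j ∈ Finset.univ.erase (Sum.inr ()), Rn d 1 (Trow (par j)) := by
      rw [REL, hsplit]
      show Rn d 1 (Trow (par (Sum.inr ()))) = _
      abel
    rw [heq]
    refine sub_mem (Submodule.sum_mem _ fun j _ => ?_) (Submodule.sum_mem _ fun j hj => ?_)
    · refine Submodule.subset_span (hmemS' (Sum.inl j) ?_)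
      simp [hjstar]
    · refine Submodule.subset_span (hmemS' (Sum.inr j) ?_)
      intro hcontr
      rw [hjstar] at hcontr
      exact (Finset.mem_erase.mp hj).1 (Sum.inr.inj hcontr)
  have hsub : Set.range (fun T : {T : Submodule (ZMod d) (V6 d) // IsSLS T} => Rn d 1 T.1)
      ⊆ SetLike.coe (Submodule.span ℂ (S' : Set (Matrix (Fin 1 → F3 d) (Fin 1 → F3 d) ℂ))) := by
    rintro x ⟨T, rfl⟩
    obtain ⟨i, rfl⟩ := Phi_surj hodd T
    by_cases hi : i = jstar
    · subst hi
      exact hmem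
    · exact Submodule.subset_span (hmemS' i hi)
  have hcardIdx : Fintype.card (Idx d) = 2 * d + 2 := by
    simp only [Idx, Fintype.card_sum, ZMod.card, Fintype.card_unit]
    ring
  have hup : Module.finrank ℂ
      ↥(Submodule.span ℂ (Set.range
        (fun T : {T : Submodule (ZMod d) (V6 d) // IsSLS T} => Rn d 1 T.1))) ≤ 2 * d + 1 := by
    have h1 : Submodule.span ℂ (Set.range
        (fun T : {T : Submodule (ZMod d) (V6 d) // IsSLS T} => Rn d 1 T.1))
        ≤ Submodule.span ℂ (S' : Set _) := Submodule.span_le.mpr hsub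
    have h2 := Submodule.finrank_mono (R := ℂ) h1
    have h3 := finrank_span_finset_le_card (R := ℂ) S'
    rw [Set.finrank] at h3
    have h4 : S'.card ≤ (Finset.univ.erase jstar).card := Finset.card_image_le
    have h5 : (Finset.univ.erase jstar).card = Fintype.card (Idx d) - 1 := by
      rw [Finset.card_erase_of_mem (Finset.mem_univ _), Finset.card_univ]
    omega
  have hdown : 2 * d + 1 ≤ Module.finrank ℂ
      ↥(Submodule.span ℂ (Set.range
        (fun T : {T : Submodule (ZMod d) (V6 d) // IsSLS T} => Rn d 1 T.1))) := by
    set W := Submodule.span ℂ (Set.range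
      (fun T : {T : Submodule (ZMod d) (V6 d) // IsSLS T} => Rn d 1 T.1)) with hW
    set s₀ : Set {T : Submodule (ZMod d) (V6 d) // IsSLS T} := {Phi jstar}ᶜ with hs₀def
    have hs₀ : s₀.ncard = 2 * d + 1 := by
      have h := Set.ncard_add_ncard_compl s₀
      have hc : s₀ᶜ = {Phi jstar} := by rw [hs₀def, compl_compl]
      rw [hc, Set.ncard_singleton] at h
      omega
    have hli := part3 hodd hcard s₀ hs₀
    let b : ↥s₀ → ↥W := fun x => ⟨Rn d 1 x.1.1, Submodule.subset_span ⟨x.1, rfl⟩⟩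
    have hb : LinearIndependent ℂ b := by
      apply LinearIndependent.of_comp W.subtype
      exact hli
    have hcardle := hb.fintype_card_le_finrank
    rwa [← Nat.card_eq_fintype_card, Nat.card_coe_set_eq, hs₀] at hcardle
  omega

end SLSAux

theorem stmt15 (d : ℕ) [NeZero d] (hd : d.Prime) (hodd : Odd d) (n : ℕ) (hn : 1 ≤ n) :
    (2 ≤ n →
      LinearIndependent ℂ
        (fun T : {T : Submodule (ZMod d) (V6 d) // IsSLS T} => Rn d n T.1)) ∧
    (n = 1 →
      Module.finrank ℂ
          ↥(Submodule.span ℂ (Set.range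
            (fun T : {T : Submodule (ZMod d) (V6 d) // IsSLS T} => Rn d 1 T.1))) =
        2 * d + 1 ∧
      ∀ s : Set {T : Submodule (ZMod d) (V6 d) // IsSLS T}, s.ncard = 2 * d + 1 →
        LinearIndependent ℂ (fun T : ↥s => Rn d 1 T.1.1)) := by
  haveI hfact : Fact (Nat.Prime d) := ⟨hd⟩
  haveI : Finite {T : Submodule (ZMod d) (V6 d) // IsSLS T} := SLSAux.finite_SLS hodd
  haveI : Fintype {T : Submodule (ZMod d) (V6 d) // IsSLS T} := Fintype.ofFinite _
  have hcard := SLSAux.card_SLS (d := d) hodd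
  refine ⟨fun hn2 => SLSAux.part1 hodd hn2, fun _ => ?_⟩
  exact ⟨SLSAux.part2rank hodd hcard, fun s hs => SLSAux.part3 hodd hcard s hs⟩
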